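/- arXiv:1310.5558 — 2 statements merged into one kernel-verified Lean document; each statement's English description precedes it below -/
import Mathlib

section
/- Strong timed bisimulation is a congruence for the product of TTS: if T1 is strongly timed bisimilar to T1' and T2 is strongly timed bisimilar to T2' (where T1, T1' share alphabet Σ1 and T2, T2' share alphabet Σ2), then T1 × T2 is strongly timed bisimilar to T1' × T2'. -/
open Classical
noncomputable section

abbrev Time := NNReal

/-- Timed transition system: states, initial state, action alphabet,
labelled transitions (actions or non-negative real delays). -/
structure TTS (Act : Type) where
  State : Type
  init : State
  alph : Set Act
  tr : State → Act ⊕ Time → State → Prop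

namespace TTS

variable {Act : Type}

/-- Product of two TTS (synchronizing on common non-silent actions and on delays). -/
def Prod (ε : Act) (T₁ T₂ : TTS Act) : TTS Act where
  State := T₁.State × T₂.State
  init := (T₁.init, T₂.init)
  alph := T₁.alph ∪ T₂.alph
  tr := fun s l s' =>
    match l with
    | Sum.inl a =>
        (a ∈ T₁.alph \ (T₂.alph \ {ε}) ∧ T₁.tr s.1 (Sum.inl a) s'.1 ∧ s'.2 = s.2) ∨
        (a ∈ T₂.alph \ (T₁.alph \ {ε}) ∧ T₂.tr s.2 (Sum.inl a) s'.2 ∧ s'.1 = s.1) ∨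
        (a ∈ (T₁.alph \ {ε}) ∩ (T₂.alph \ {ε}) ∧
          T₁.tr s.1 (Sum.inl a) s'.1 ∧ T₂.tr s.2 (Sum.inl a) s'.2)
    | Sum.inr d => T₁.tr s.1 (Sum.inr d) s'.1 ∧ T₂.tr s.2 (Sum.inr d) s'.2

/-- Isomorphism of TTS: a bijection on states preserving the initial state,
the alphabet and the transitions in both directions. -/
structure Iso (T₁ T₂ : TTS Act) where
  toEquiv : T₁.State ≃ T₂.State
  init_eq : toEquiv T₁.init = T₂.init
  alph_eq : T₁.alph = T₂.alph
  tr_iff : ∀ s l s', T₁.tr s l s' ↔ T₂.tr (toEquiv s) l (toEquiv s')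

/-- Strong timed bisimulation. -/
def IsBisim (T₁ T₂ : TTS Act) (R : T₁.State → T₂.State → Prop) : Prop :=
  R T₁.init T₂.init ∧
  ∀ s₁ s₂, R s₁ s₂ →
    (∀ l s₁', T₁.tr s₁ l s₁' → ∃ s₂', T₂.tr s₂ l s₂' ∧ R s₁' s₂') ∧
    (∀ l s₂', T₂.tr s₂ l s₂' → ∃ s₁', T₁.tr s₁ l s₁' ∧ R s₁' s₂')

def Bisimilar (T₁ T₂ : TTS Act) : Prop := ∃ R, IsBisim T₁ T₂ R

def EpsStep (ε : Act) (T : TTS Act) (s s' : T.State) : Prop := T.tr s (Sum.inl ε) s'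

def EpsClosure (ε : Act) (T : TTS Act) : T.State → T.State → Prop :=
  Relation.ReflTransGen (EpsStep ε T)

/-- Weak delay transitions: ε-closures interleaved with delays summing up to `d`. -/
inductive WeakDelay (ε : Act) (T : TTS Act) : T.State → Time → T.State → Prop
  | base {s s'} : EpsClosure ε T s s' → WeakDelay ε T s 0 s'
  | step {s t t' s' : T.State} {d d' : Time} : EpsClosure ε T s t → T.tr t (Sum.inr d) t' →
      WeakDelay ε T t' d' s' → WeakDelay ε T s (d + d') s'

/-- Weak transition relation. -/
def Weak (ε : Act) (T : TTS Act) (s : T.State) (l : Act ⊕ Time) (s' : T.State) : Prop :=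
  match l with
  | Sum.inl a =>
      (a = ε ∧ EpsClosure ε T s s') ∨
      (∃ t t', EpsClosure ε T s t ∧ T.tr t (Sum.inl a) t' ∧ EpsClosure ε T t' s')
  | Sum.inr d => WeakDelay ε T s d s'

/-- Weak timed bisimulation. -/
def IsWeakBisim (ε : Act) (T₁ T₂ : TTS Act) (R : T₁.State → T₂.State → Prop) : Prop :=
  R T₁.init T₂.init ∧
  ∀ s₁ s₂, R s₁ s₂ →
    (∀ l s₁', T₁.tr s₁ l s₁' → ∃ s₂', Weak ε T₂ s₂ l s₂' ∧ R s₁' s₂') ∧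
    (∀ l s₂', T₂.tr s₂ l s₂' → ∃ s₁', Weak ε T₁ s₁ l s₁' ∧ R s₁' s₂')

def WeakBisimilar (ε : Act) (T₁ T₂ : TTS Act) : Prop := ∃ R, IsWeakBisim ε T₁ T₂ R

/-- Reachability from the initial state. -/
def Reach (T : TTS Act) : T.State → Prop :=
  Relation.ReflTransGen (fun s s' => ∃ l, T.tr s l s') T.init

/-- Relabelling the actions of a TTS. -/
def relabel {B : Type} (T : TTS Act) (f : Act → B) : TTS B where
  State := T.State
  init := T.init
  alph := f '' T.alph
  tr := fun s l s' =>
    match l with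
    | Sum.inl b => ∃ a, f a = b ∧ T.tr s (Sum.inl a) s'
    | Sum.inr d => T.tr s (Sum.inr d) s'

/-- `Gen T t s w s'` : from state `s` at absolute time `t`, some path generates the
timed word `w` (actions with absolute timestamps) and ends in `s'`. -/
inductive Gen (T : TTS Act) : Time → T.State → List (Act × Time) → T.State → Prop
  | nil (t : Time) (s : T.State) : Gen T t s [] s
  | act {t : Time} {s s' s'' : T.State} {a : Act} {w : List (Act × Time)} :
      T.tr s (Sum.inl a) s' → Gen T t s' w s'' → Gen T t s ((a, t) :: w) s''
  | delay {t : Time} {s s' s'' : T.State} {d : Time} {w : List (Act × Time)} :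
      T.tr s (Sum.inr d) s' → Gen T (t + d) s' w s'' → Gen T t s w s''

/-- Non-Zenoness: along every infinite run, time diverges. -/
def NonZeno (T : TTS Act) : Prop :=
  ∀ (f : ℕ → T.State) (lab : ℕ → Act ⊕ Time),
    f 0 = T.init →
    (∀ n, T.tr (f n) (lab n) (f (n + 1))) →
    ∀ B : Time, ∃ n, B < (Finset.range n).sum fun i => Sum.elim (fun _ => (0 : Time)) id (lab i)

/-- One step of a zero-duration path over the action set `Λ`. -/
def ZeroStep (T : TTS Act) (Λ : Set Act) (s s' : T.State) : Prop :=
  (∃ a ∈ Λ, T.tr s (Sum.inl a) s') ∨ T.tr s (Sum.inr 0) s'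

/-- States reachable by actions of `Λ` in zero delay ("unobservably reachable"). -/
def UR (T : TTS Act) (Λ : Set Act) (s : T.State) : Set T.State :=
  {s' | Relation.ReflTransGen (ZeroStep T Λ) s s'}

/-- Paths of a given duration using only actions from `Λ` (and delays). -/
inductive LPath (T : TTS Act) (Λ : Set Act) : T.State → Time → T.State → Prop
  | refl (s : T.State) : LPath T Λ s 0 s
  | act {s s' s'' : T.State} {d : Time} {a : Act} :
      a ∈ Λ → T.tr s (Sum.inl a) s' → LPath T Λ s' d s'' → LPath T Λ s d s''
  | delay {s s' s'' : T.State} {d d' : Time} :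
      T.tr s (Sum.inr d) s' → LPath T Λ s' d' s'' → LPath T Λ s (d + d') s''

end TTS

/-! ## Timed automata (with semantic guards) -/

/-- An edge of a timed automaton reading and resetting its own clocks. -/
structure Edge1 (Act C : Type) (Loc : Type) where
  src : Loc
  guard : (C → Time) → Prop
  act : Act
  reset : Set C
  tgt : Loc

/-- A timed automaton over its own clocks `C`. -/
structure TA1 (Act C : Type) where
  Loc : Type
  init : Loc
  alph : Set Act
  edges : Set (Edge1 Act C Loc)
  inv : Loc → (C → Time) → Prop

/-- An edge of a timed automaton that may read the clocks `C1` of its neighbour,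
resets its own clocks (`C2`) and may copy neighbour clocks into its own clocks
at synchronizations (`upd`). -/
structure Edge2 (Act C1 C2 : Type) (Loc : Type) where
  src : Loc
  guard : ((C1 ⊕ C2) → Time) → Prop
  act : Act
  reset : Set C2
  upd : C2 → Option C1
  tgt : Loc

/-- A timed automaton owning clocks `C2`, possibly reading the clocks `C1` of its
neighbour. -/
structure TA2 (Act C1 C2 : Type) where
  Loc : Type
  init : Loc
  alph : Set Act
  edges : Set (Edge2 Act C1 C2 Loc)
  inv : Loc → ((C1 ⊕ C2) → Time) → Prop

variable {Act C C1 C2 : Type}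

def resetVal (v : C → Time) (r : Set C) : C → Time :=
  fun x => if x ∈ r then 0 else v x

def shiftVal (v : C → Time) (d : Time) : C → Time := fun x => v x + d

def applyUpd (w : C2 → Time) (u : C2 → Option C1) (v1 : C1 → Time) : C2 → Time :=
  fun x => match u x with
  | some y => v1 y
  | none => w x

/-- States of (the TTS of) `A1`. -/
abbrev Q1 (A1 : TA1 Act C1) : Type := A1.Loc × (C1 → Time)

/-- Local states of `A2` (its location and the valuation of its own clocks). -/
abbrev Q2 (A2 : TA2 Act C1 C2) : Type := A2.Loc × (C2 → Time)

/-- The TTS of a single timed automaton. -/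
def TA1.tts (A1 : TA1 Act C1) : TTS Act where
  State := Q1 A1
  init := (A1.init, fun _ => 0)
  alph := A1.alph
  tr := fun s l s' =>
    match l with
    | Sum.inl a => ∃ e ∈ A1.edges, e.src = s.1 ∧ e.act = a ∧ e.guard s.2 ∧
        s'.1 = e.tgt ∧ s'.2 = resetVal s.2 e.reset ∧ A1.inv e.tgt s'.2
    | Sum.inr d => s'.1 = s.1 ∧ s'.2 = shiftVal s.2 d ∧
        ∀ d' ≤ d, A1.inv s.1 (shiftVal s.2 d')

/-- The synchronization alphabet. -/
def syncAlph (A1 : TA1 Act C1) (A2 : TA2 Act C1 C2) (ε : Act) : Set Act :=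
  (A1.alph \ {ε}) ∩ (A2.alph \ {ε})

def joint (v1 : C1 → Time) (v2 : C2 → Time) : (C1 ⊕ C2) → Time := Sum.elim v1 v2

/-- The TTS of the network `A1 ∥ A2`. -/
def sys (ε : Act) (A1 : TA1 Act C1) (A2 : TA2 Act C1 C2) : TTS Act where
  State := Q1 A1 × Q2 A2
  init := ((A1.init, fun _ => 0), (A2.init, fun _ => 0))
  alph := A1.alph ∪ A2.alph
  tr := fun s l s' =>
    match l with
    | Sum.inl a =>
        (a ∈ A1.alph \ (A2.alph \ {ε}) ∧
          (∃ e ∈ A1.edges, e.src = s.1.1 ∧ e.act = a ∧ e.guard s.1.2 ∧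
            s'.1.1 = e.tgt ∧ s'.1.2 = resetVal s.1.2 e.reset ∧
            A1.inv e.tgt s'.1.2) ∧ s'.2 = s.2) ∨
        (a ∈ A2.alph \ (A1.alph \ {ε}) ∧
          (∃ e ∈ A2.edges, e.src = s.2.1 ∧ e.act = a ∧ e.guard (joint s.1.2 s.2.2) ∧
            s'.2.1 = e.tgt ∧ s'.2.2 = applyUpd (resetVal s.2.2 e.reset) e.upd s.1.2 ∧
            A2.inv e.tgt (joint s.1.2 s'.2.2)) ∧ s'.1 = s.1) ∨
        (a ∈ syncAlph A1 A2 ε ∧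
          ∃ e1 ∈ A1.edges, ∃ e2 ∈ A2.edges,
            e1.src = s.1.1 ∧ e1.act = a ∧ e2.src = s.2.1 ∧ e2.act = a ∧
            e1.guard s.1.2 ∧ e2.guard (joint s.1.2 s.2.2) ∧
            s'.1.1 = e1.tgt ∧ s'.1.2 = resetVal s.1.2 e1.reset ∧
            s'.2.1 = e2.tgt ∧ s'.2.2 = applyUpd (resetVal s.2.2 e2.reset) e2.upd s'.1.2 ∧
            A1.inv e1.tgt s'.1.2 ∧ A2.inv e2.tgt (joint s'.1.2 s'.2.2))
    | Sum.inr d =>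
        s'.1.1 = s.1.1 ∧ s'.2.1 = s.2.1 ∧
        s'.1.2 = shiftVal s.1.2 d ∧ s'.2.2 = shiftVal s.2.2 d ∧
        ∀ d' ≤ d, A1.inv s.1.1 (shiftVal s.1.2 d') ∧
          A2.inv s.2.1 (joint (shiftVal s.1.2 d') (shiftVal s.2.2 d'))

/-- Actions of `A2` that are local (not synchronizations). -/
def ctxLocal (ε : Act) (A1 : TA1 Act C1) (A2 : TA2 Act C1 C2) : Set Act :=
  A2.alph \ syncAlph A1 A2 ε

/-- Actions of `A1` that are local to `A1` (unobservable by `A2`). -/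
def A1Local (ε : Act) (A1 : TA1 Act C1) (A2 : TA2 Act C1 C2) : Set Act :=
  A1.alph \ (A2.alph \ {ε})

/-- Unobservably reachable states of `A1`. -/
def urA1 (ε : Act) (A1 : TA1 Act C1) (A2 : TA2 Act C1 C2) (s1 : Q1 A1) : Set (Q1 A1) :=
  TTS.UR A1.tts (A1Local ε A1 A2) s1

/-- The contextual TTS of `A2` in the context of `A1`. -/
def ctx (ε : Act) (A1 : TA1 Act C1) (A2 : TA2 Act C1 C2) : TTS (Act ⊕ (Act × Q1 A1)) where
  State := Set (Q1 A1) × Q2 A2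
  init := (urA1 ε A1 A2 (A1.init, fun _ => 0), (A2.init, fun _ => 0))
  alph := (Sum.inl '' ctxLocal ε A1 A2) ∪
    {l | ∃ a ∈ syncAlph A1 A2 ε, ∃ q : Q1 A1, l = Sum.inr (a, q)}
  tr := fun S l S' =>
    match l with
    | Sum.inl (Sum.inl a) =>
        a ∈ ctxLocal ε A1 A2 ∧
        (∃ s1 ∈ S.1, TTS.Weak ε (sys ε A1 A2) (s1, S.2) (Sum.inl a) (s1, S'.2)) ∧
        S'.1 = {s1 ∈ S.1 | TTS.Weak ε (sys ε A1 A2) (s1, S.2) (Sum.inl a) (s1, S'.2)}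
    | Sum.inl (Sum.inr (a, t1)) =>
        a ∈ syncAlph A1 A2 ε ∧
        (∃ s1 ∈ S.1, TTS.Weak ε (sys ε A1 A2) (s1, S.2) (Sum.inl a) (t1, S'.2)) ∧
        S'.1 = urA1 ε A1 A2 t1
    | Sum.inr d =>
        (∃ s1 ∈ S.1, ∃ t1, TTS.LPath (sys ε A1 A2) (A1Local ε A1 A2) (s1, S.2) d (t1, S'.2)) ∧
        S'.1 = {t1 | ∃ s1 ∈ S.1,
          TTS.LPath (sys ε A1 A2) (A1Local ε A1 A2) (s1, S.2) d (t1, S'.2)}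

/-- "No restriction" in the contextual TTS: every local action or delay enabled from a
reachable contextual state is enabled uniformly from all its members. -/
def noRest (ε : Act) (A1 : TA1 Act C1) (A2 : TA2 Act C1 C2) : Prop :=
  ∀ S1 s2, TTS.Reach (ctx ε A1 A2) (S1, s2) →
    (∀ a ∈ ctxLocal ε A1 A2, ∀ s2' : Q2 A2,
      (∃ S1', (ctx ε A1 A2).tr (S1, s2) (Sum.inl (Sum.inl a)) (S1', s2')) ↔
        ∀ s1 ∈ S1, TTS.Weak ε (sys ε A1 A2) (s1, s2) (Sum.inl a) (s1, s2')) ∧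
    (∀ d : Time,
      (∃ S', (ctx ε A1 A2).tr (S1, s2) (Sum.inr d) S') ↔
        ∀ s1 ∈ S1, ∃ t, TTS.LPath (sys ε A1 A2) (A1Local ε A1 A2) (s1, s2) d t)

/-- `TTS(A1)` with synchronization transitions relabelled by the reached state of `A1`. -/
def t1Q (ε : Act) (A1 : TA1 Act C1) (A2 : TA2 Act C1 C2) : TTS (Act ⊕ (Act × Q1 A1)) where
  State := Q1 A1
  init := (A1.init, fun _ => 0)
  alph := (Sum.inl '' (A1.alph \ syncAlph A1 A2 ε)) ∪
    {l | ∃ a ∈ syncAlph A1 A2 ε, ∃ q : Q1 A1, l = Sum.inr (a, q)}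
  tr := fun s l s' =>
    match l with
    | Sum.inl (Sum.inl a) => a ∉ syncAlph A1 A2 ε ∧ A1.tts.tr s (Sum.inl a) s'
    | Sum.inl (Sum.inr (a, t1)) => a ∈ syncAlph A1 A2 ε ∧ A1.tts.tr s (Sum.inl a) s' ∧ t1 = s'
    | Sum.inr d => A1.tts.tr s (Sum.inr d) s'

/-- `TTS(A1 ∥ A2)` with synchronization transitions relabelled by the reached state of `A1`. -/
def sysQ (ε : Act) (A1 : TA1 Act C1) (A2 : TA2 Act C1 C2) : TTS (Act ⊕ (Act × Q1 A1)) where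
  State := Q1 A1 × Q2 A2
  init := (sys ε A1 A2).init
  alph := (Sum.inl '' ((A1.alph ∪ A2.alph) \ syncAlph A1 A2 ε)) ∪
    {l | ∃ a ∈ syncAlph A1 A2 ε, ∃ q : Q1 A1, l = Sum.inr (a, q)}
  tr := fun s l s' =>
    match l with
    | Sum.inl (Sum.inl a) => a ∉ syncAlph A1 A2 ε ∧ (sys ε A1 A2).tr s (Sum.inl a) s'
    | Sum.inl (Sum.inr (a, t1)) => a ∈ syncAlph A1 A2 ε ∧ (sys ε A1 A2).tr s (Sum.inl a) s' ∧ t1 = s'.1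
    | Sum.inr d => (sys ε A1 A2).tr s (Sum.inr d) s'

/-- A guard/invariant over `C1 ⊕ C2` does not read the clocks `C1`. -/
def indepC1 (g : ((C1 ⊕ C2) → Time) → Prop) : Prop :=
  ∀ v w : (C1 ⊕ C2) → Time, (∀ x : C2, v (Sum.inr x) = w (Sum.inr x)) → (g v ↔ g w)

/-- Determinism of `A2`: no ε-edges, and at most one edge per location and action. -/
def Det2 (ε : Act) (A2 : TA2 Act C1 C2) : Prop :=
  (∀ e ∈ A2.edges, e.act ≠ ε) ∧
  ∀ e ∈ A2.edges, ∀ e' ∈ A2.edges, e.src = e'.src → e.act = e'.act → e = e'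

/-- Viewing a timed automaton over its own clocks `C2` as a component that
(potentially) lives next to clocks `C1`, without ever reading them. -/
def TA1.toTA2 (A : TA1 Act C2) : TA2 Act C1 C2 where
  Loc := A.Loc
  init := A.init
  alph := A.alph
  edges := {E | ∃ e ∈ A.edges,
    E = ⟨e.src, fun v => e.guard (fun x => v (Sum.inr x)), e.act, e.reset,
      fun _ => none, e.tgt⟩}
  inv := fun l v => A.inv l (fun x => v (Sum.inr x))

/-- strong timed bisimulation is a congruence for the product of TTS. -/
theorem bisim_congruence_prod {Act : Type} (ε : Act) (T₁ T₁' T₂ T₂' : TTS Act)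
    (halph₁ : T₁.alph = T₁'.alph) (halph₂ : T₂.alph = T₂'.alph)
    (h₁ : TTS.Bisimilar T₁ T₁') (h₂ : TTS.Bisimilar T₂ T₂') :
    TTS.Bisimilar (TTS.Prod ε T₁ T₂) (TTS.Prod ε T₁' T₂') := by
  obtain ⟨R₁, hR₁init, hR₁⟩ := h₁
  obtain ⟨R₂, hR₂init, hR₂⟩ := h₂
  refine ⟨fun s s' => R₁ s.1 s'.1 ∧ R₂ s.2 s'.2, ⟨hR₁init, hR₂init⟩, ?_⟩
  rintro ⟨s₁, s₂⟩ ⟨s₁', s₂'⟩ ⟨hr₁, hr₂⟩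
  obtain ⟨hf₁, hb₁⟩ := hR₁ _ _ hr₁
  obtain ⟨hf₂, hb₂⟩ := hR₂ _ _ hr₂
  constructor
  · rintro (a | d) ⟨t₁, t₂⟩ htr
    · rcases htr with ⟨ha, h1, h2⟩ | ⟨ha, h2, h1⟩ | ⟨ha, h1, h2⟩
      · obtain ⟨u₁, hu₁, hru₁⟩ := hf₁ _ _ h1
        exact ⟨(u₁, s₂'), Or.inl ⟨by rw [← halph₁, ← halph₂]; exact ha, hu₁, rfl⟩,
          hru₁, h2 ▸ hr₂⟩
      · obtain ⟨u₂, hu₂, hru₂⟩ := hf₂ _ _ h2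
        exact ⟨(s₁', u₂), Or.inr (Or.inl ⟨by rw [← halph₁, ← halph₂]; exact ha, hu₂, rfl⟩),
          h1 ▸ hr₁, hru₂⟩
      · obtain ⟨u₁, hu₁, hru₁⟩ := hf₁ _ _ h1
        obtain ⟨u₂, hu₂, hru₂⟩ := hf₂ _ _ h2
        exact ⟨(u₁, u₂), Or.inr (Or.inr ⟨by rw [← halph₁, ← halph₂]; exact ha, hu₁, hu₂⟩),
          hru₁, hru₂⟩
    · obtain ⟨h1, h2⟩ := htr
      obtain ⟨u₁, hu₁, hru₁⟩ := hf₁ _ _ h1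
      obtain ⟨u₂, hu₂, hru₂⟩ := hf₂ _ _ h2
      exact ⟨(u₁, u₂), ⟨hu₁, hu₂⟩, hru₁, hru₂⟩
  · rintro (a | d) ⟨t₁, t₂⟩ htr
    · rcases htr with ⟨ha, h1, h2⟩ | ⟨ha, h2, h1⟩ | ⟨ha, h1, h2⟩
      · obtain ⟨u₁, hu₁, hru₁⟩ := hb₁ _ _ h1
        exact ⟨(u₁, s₂), Or.inl ⟨by rw [halph₁, halph₂]; exact ha, hu₁, rfl⟩,
          hru₁, h2 ▸ hr₂⟩
      · obtain ⟨u₂, hu₂, hru₂⟩ := hb₂ _ _ h2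
        exact ⟨(s₁, u₂), Or.inr (Or.inl ⟨by rw [halph₁, halph₂]; exact ha, hu₂, rfl⟩),
          h1 ▸ hr₁, hru₂⟩
      · obtain ⟨u₁, hu₁, hru₁⟩ := hb₁ _ _ h1
        obtain ⟨u₂, hu₂, hru₂⟩ := hb₂ _ _ h2
        exact ⟨(u₁, u₂), Or.inr (Or.inr ⟨by rw [halph₁, halph₂]; exact ha, hu₁, hu₂⟩),
          hru₁, hru₂⟩
    · obtain ⟨h1, h2⟩ := htr
      obtain ⟨u₁, hu₁, hru₁⟩ := hb₁ _ _ h1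
      obtain ⟨u₂, hu₂, hru₂⟩ := hb₂ _ _ h2
      exact ⟨(u₁, u₂), ⟨hu₁, hu₂⟩, hru₁, hru₂⟩
end
end

section
/- If A1 and A2 are timed automata with disjoint clock sets (X1 ∩ X2 = ∅), then TTS(A1) × TTS(A2) is isomorphic to TTS(A1 ∥ A2). -/
open Classical
noncomputable section

variable {Act C C1 C2 : Type}

/-- if `A1` and `A2` have disjoint clock sets (here: distinct clock
types `C1` and `C2`), then `TTS(A1) × TTS(A2)` is isomorphic to `TTS(A1 ∥ A2)`. -/
theorem disjoint_clocks_iso {Act C1 C2 : Type} (ε : Act)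
    (A1 : TA1 Act C1) (A2 : TA1 Act C2) :
    Nonempty (TTS.Iso (TTS.Prod ε A1.tts A2.tts)
      (sys ε A1 (TA1.toTA2 (C1 := C1) A2))) := by
  refine ⟨⟨Equiv.refl _, rfl, rfl, ?_⟩⟩
  rintro ⟨s1, s2⟩ l ⟨s1', s2'⟩
  show (TTS.Prod ε A1.tts A2.tts).tr (s1, s2) l (s1', s2') ↔
    (sys ε A1 (TA1.toTA2 (C1 := C1) A2)).tr (s1, s2) l (s1', s2')
  cases l with
  | inr d =>
    show (A1.tts.tr s1 (Sum.inr d) s1' ∧ A2.tts.tr s2 (Sum.inr d) s2') ↔ _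
    constructor
    · rintro ⟨⟨h11, h12, h13⟩, h21, h22, h23⟩
      exact ⟨h11, h21, h12, h22, fun d' hd' => ⟨h13 d' hd', h23 d' hd'⟩⟩
    · rintro ⟨h11, h21, h12, h22, h⟩
      exact ⟨⟨h11, h12, fun d' hd' => (h d' hd').1⟩,
        ⟨h21, h22, fun d' hd' => (h d' hd').2⟩⟩
  | inl a =>
    constructor
    · rintro (⟨ha, h1, h2⟩ | ⟨ha, ⟨e, he, hsrc, hact, hg, ht, hv, hinv⟩, h2⟩ |
        ⟨ha, ⟨e1, he1, h1⟩, e2, he2, hsrc, hact, hg, ht, hv, hinv⟩)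
      · exact Or.inl ⟨ha, h1, h2⟩
      · refine Or.inr (Or.inl ⟨ha, ⟨⟨e.src, fun v => e.guard (fun x => v (Sum.inr x)),
          e.act, e.reset, fun _ => none, e.tgt⟩, ⟨e, he, rfl⟩,
          hsrc, hact, hg, ht, hv, hinv⟩, h2⟩)
      · exact Or.inr (Or.inr ⟨ha, e1, he1, ⟨e2.src,
          fun v => e2.guard (fun x => v (Sum.inr x)), e2.act, e2.reset,
          fun _ => none, e2.tgt⟩, ⟨e2, he2, rfl⟩, h1.1, h1.2.1,
          hsrc, hact, h1.2.2.1, hg, h1.2.2.2.1, h1.2.2.2.2.1, ht, hv,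
          h1.2.2.2.2.2, hinv⟩)
    · rintro (⟨ha, h1, h2⟩ | ⟨ha, ⟨E, ⟨e, he, rfl⟩, hsrc, hact, hg, ht, hv, hinv⟩, h2⟩ |
        ⟨ha, e1, he1, E, ⟨e2, he2, rfl⟩, hsrc1, hact1, hsrc2, hact2, hg1, hg2,
          ht1, hv1, ht2, hv2, hinv1, hinv2⟩)
      · exact Or.inl ⟨ha, h1, h2⟩
      · exact Or.inr (Or.inl ⟨ha, ⟨e, he, hsrc, hact, hg, ht, hv, hinv⟩, h2⟩)
      · exact Or.inr (Or.inr ⟨ha, ⟨e1, he1, hsrc1, hact1, hg1, ht1, hv1, hinv1⟩,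
          ⟨e2, he2, hsrc2, hact2, hg2, ht2, hv2, hinv2⟩⟩)
end
end
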